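/- arXiv:2309.17193 — 2 statements merged into one kernel-verified Lean document; each statement's English description precedes it below -/
import Mathlib

section
/- For any channel with input alphabet \Delta_k and finite output alphabet Y such that x \mapsto P(y|x) is continuous for each y, there exists a capacity-achieving input distribution supported on at most |Y| points of \Delta_k. -/
open Finset MeasureTheory

/-- The probability simplex `Δ_k`. -/
def simplex (k : ℕ) : Set (Fin k → ℝ) := {x | (∀ i, 0 ≤ x i) ∧ ∑ i, x i = 1}

/-- Output distribution induced by input distribution `μ` through channel `W`. -/
noncomputable def outDistW {k : ℕ} {Y : Type*} [Fintype Y]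
    (W : Y → (Fin k → ℝ) → ℝ) (μ : Measure (Fin k → ℝ)) (y : Y) : ℝ :=
  ∫ x, W y x ∂μ

/-- Mutual information of the channel `W` with input distribution `μ`, as the average
KL divergence `∫ D(W(·|x) ‖ P_Y) dμ(x)`. -/
noncomputable def MIW {k : ℕ} {Y : Type*} [Fintype Y]
    (W : Y → (Fin k → ℝ) → ℝ) (μ : Measure (Fin k → ℝ)) : ℝ :=
  ∫ x, ∑ y, W y x * Real.log (W y x / outDistW W μ y) ∂μ

/-! ### Auxiliary development -/

section Aux

variable {k : ℕ} {Y : Type*} [Fintype Y]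

/-- `∑ y, W y x * log (W y x)`, the (negative) conditional entropy integrand. -/
noncomputable def gW (W : Y → (Fin k → ℝ) → ℝ) (x : Fin k → ℝ) : ℝ :=
  ∑ y, W y x * Real.log (W y x)

lemma simplex_eq_stdSimplex : simplex k = stdSimplex ℝ (Fin k) := rfl

lemma isCompact_simplex : IsCompact (simplex k) := by
  rw [simplex_eq_stdSimplex]; exact isCompact_stdSimplex _ _

lemma continuous_gW {W : Y → (Fin k → ℝ) → ℝ} (hW : ∀ y, Continuous (W y)) :
    Continuous (gW W) :=
  continuous_finset_sum _ fun y _ => Real.continuous_mul_log.comp (hW y)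

/-- Pointwise algebraic identity for the KL integrand. -/
lemma sum_log_div {w q : Y → ℝ} (hq : ∀ y, q y = 0 → w y = 0) :
    ∑ y, w y * Real.log (w y / q y)
      = (∑ y, w y * Real.log (w y)) - ∑ y, w y * Real.log (q y) := by
  rw [← Finset.sum_sub_distrib]
  refine Finset.sum_congr rfl fun y _ => ?_
  by_cases hw : w y = 0
  · simp [hw]
  · have hq' : q y ≠ 0 := fun h => hw (hq y h)
    rw [Real.log_div hw hq']; ring

lemma integrable_of_cont {E : Type*} [NormedAddCommGroup E]
    (ν : Measure (Fin k → ℝ)) [IsFiniteMeasure ν]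
    (hae : ∀ᵐ x ∂ν, x ∈ simplex k) {f : (Fin k → ℝ) → E} (hf : Continuous f) :
    Integrable f ν := by
  obtain ⟨M, hM⟩ := isCompact_simplex.exists_bound_of_continuousOn hf.continuousOn
  exact (integrable_const M).mono' hf.aestronglyMeasurable
    (hae.mono fun x hx => hM x hx)

/-- The key integral formula for mutual information. -/
lemma MIW_eq (W : Y → (Fin k → ℝ) → ℝ) (hWcont : ∀ y, Continuous (W y))
    (hWpos : ∀ y, ∀ x ∈ simplex k, 0 ≤ W y x)
    (ν : Measure (Fin k → ℝ)) [IsProbabilityMeasure ν] (hν : ν (simplex k)ᶜ = 0) :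
    MIW W ν = (∫ x, gW W x ∂ν)
      - ∑ y, outDistW W ν y * Real.log (outDistW W ν y) := by
  have hae : ∀ᵐ x ∂ν, x ∈ simplex k := by
    rw [ae_iff]; exact hν
  have hz : ∀ᵐ x ∂ν, ∀ y, outDistW W ν y = 0 → W y x = 0 := by
    rw [ae_all_iff]
    intro y
    by_cases h0 : outDistW W ν y = 0
    · have hint : Integrable (W y) ν := integrable_of_cont ν hae (hWcont y)
      have hnn : 0 ≤ᵐ[ν] W y := hae.mono fun x hx => hWpos y x hx
      have := (integral_eq_zero_iff_of_nonneg_ae hnn hint).mp h0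
      exact this.mono fun x hx _ => hx
    · exact Filter.Eventually.of_forall fun x h => absurd h h0
  have hcongr : MIW W ν
      = ∫ x, (gW W x - ∑ y, W y x * Real.log (outDistW W ν y)) ∂ν := by
    refine integral_congr_ae ?_
    filter_upwards [hz] with x hx
    exact sum_log_div fun y h => hx y h
  rw [hcongr, integral_sub (f := gW W)
      (g := fun x => ∑ y, W y x * Real.log (outDistW W ν y)) (integrable_of_cont ν hae (continuous_gW hWcont))
      (integrable_of_cont ν hae (continuous_finset_sum _
        fun y _ => (hWcont y).mul continuous_const)),
    integral_finset_sum _ (f := fun y x => W y x * Real.log (outDistW W ν y)) (fun y _ =>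
      integrable_of_cont ν hae ((hWcont y).mul continuous_const))]
  congr 1
  refine Finset.sum_congr rfl fun y _ => ?_
  rw [integral_mul_const]
  rfl

/-! ### Finitely supported measures -/

/-- The measure `∑ j, p j • δ_{x j}`. -/
noncomputable def atomM {m : ℕ} (x : Fin m → (Fin k → ℝ)) (p : Fin m → ℝ) :
    Measure (Fin k → ℝ) :=
  ∑ j, (ENNReal.ofReal (p j)) • Measure.dirac (x j)

lemma integral_atomM {m : ℕ} (x : Fin m → (Fin k → ℝ)) (p : Fin m → ℝ)
    (hp : ∀ j, 0 ≤ p j) (f : (Fin k → ℝ) → ℝ) :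
    ∫ z, f z ∂(atomM x p) = ∑ j, p j * f (x j) := by
  have hI : ∀ j ∈ Finset.univ (α := Fin m),
      Integrable f ((ENNReal.ofReal (p j)) • Measure.dirac (x j)) := by
    intro j _
    have h1 : Integrable f (Measure.dirac (x j)) := by
      have heq : f =ᵐ[Measure.dirac (x j)] fun _ => f (x j) := by
        rw [MeasureTheory.ae_dirac_eq]
        exact Filter.eventually_pure.2 rfl
      exact (integrable_const (f (x j))).congr heq.symm
    exact h1.smul_measure ENNReal.ofReal_ne_top
  rw [atomM, integral_finset_sum_measure hI]
  refine Finset.sum_congr rfl fun j _ => ?_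
  rw [integral_smul_measure, integral_dirac, ENNReal.toReal_ofReal (hp j),
    smul_eq_mul]

lemma atomM_apply_compl {m : ℕ} (x : Fin m → (Fin k → ℝ)) (p : Fin m → ℝ)
    {S : Finset (Fin k → ℝ)} (hx : ∀ j, x j ∈ S) :
    atomM x p ((↑S : Set (Fin k → ℝ)))ᶜ = 0 := by
  rw [atomM, Measure.finset_sum_apply]
  refine Finset.sum_eq_zero fun j _ => ?_
  rw [Measure.smul_apply, Measure.dirac_apply' _ (S.finite_toSet.measurableSet.compl)]
  have : x j ∉ ((↑S : Set (Fin k → ℝ)))ᶜ := fun h => h (hx j)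
  rw [Set.indicator_of_notMem this]
  simp

lemma atomM_prob {m : ℕ} (x : Fin m → (Fin k → ℝ)) (p : Fin m → ℝ)
    (hp : p ∈ stdSimplex ℝ (Fin m)) : IsProbabilityMeasure (atomM x p) := by
  constructor
  rw [atomM, Measure.finset_sum_apply]
  have : ∀ j ∈ Finset.univ (α := Fin m),
      ((ENNReal.ofReal (p j)) • Measure.dirac (x j)) Set.univ
        = ENNReal.ofReal (p j) := by
    intro j _
    rw [Measure.smul_apply, Measure.dirac_apply' _ MeasurableSet.univ]
    simp
  rw [Finset.sum_congr rfl this, ← ENNReal.ofReal_sum_of_nonneg fun j _ => hp.1 j,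
    hp.2, ENNReal.ofReal_one]

lemma outDistW_atomM {m : ℕ} (W : Y → (Fin k → ℝ) → ℝ)
    (x : Fin m → (Fin k → ℝ)) (p : Fin m → ℝ) (hp : ∀ j, 0 ≤ p j) (y : Y) :
    outDistW W (atomM x p) y = ∑ j, p j * W y (x j) :=
  integral_atomM x p hp _

lemma MIW_atomM {m : ℕ} (W : Y → (Fin k → ℝ) → ℝ)
    (hWpos : ∀ y, ∀ x ∈ simplex k, 0 ≤ W y x)
    (x : Fin m → (Fin k → ℝ)) (p : Fin m → ℝ)
    (hx : ∀ j, x j ∈ simplex k) (hp : p ∈ stdSimplex ℝ (Fin m)) :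
    MIW W (atomM x p) = (∑ j, p j * gW W (x j))
      - ∑ y, (∑ j, p j * W y (x j)) * Real.log (∑ j, p j * W y (x j)) := by
  set Q : Y → ℝ := fun y => ∑ j, p j * W y (x j) with hQdef
  have hQ : ∀ y, outDistW W (atomM x p) y = Q y :=
    fun y => outDistW_atomM W x p hp.1 y
  have key : ∀ j, p j ≠ 0 →
      ∑ y, W y (x j) * Real.log (W y (x j) / outDistW W (atomM x p) y)
        = gW W (x j) - ∑ y, W y (x j) * Real.log (Q y) := by
    intro j hj
    simp only [hQ]
    refine sum_log_div fun y h0 => ?_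
    have hnn : ∀ i ∈ Finset.univ (α := Fin m), 0 ≤ p i * W y (x i) :=
      fun i _ => mul_nonneg (hp.1 i) (hWpos y _ (hx i))
    have := (Finset.sum_eq_zero_iff_of_nonneg hnn).mp h0 j (Finset.mem_univ j)
    rcases mul_eq_zero.mp this with h | h
    · exact absurd h hj
    · exact h
  rw [MIW, integral_atomM x p hp.1]
  have step1 : ∑ j, p j *
      (∑ y, W y (x j) * Real.log (W y (x j) / outDistW W (atomM x p) y))
      = ∑ j, p j * (gW W (x j) - ∑ y, W y (x j) * Real.log (Q y)) := by
    refine Finset.sum_congr rfl fun j _ => ?_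
    by_cases hj : p j = 0
    · simp [hj]
    · rw [key j hj]
  rw [step1]
  have step2 : ∑ j, p j * (gW W (x j) - ∑ y, W y (x j) * Real.log (Q y))
      = (∑ j, p j * gW W (x j)) - ∑ j, ∑ y, p j * (W y (x j) * Real.log (Q y)) := by
    rw [← Finset.sum_sub_distrib]
    refine Finset.sum_congr rfl fun j _ => ?_
    rw [mul_sub, Finset.mul_sum]
  rw [step2, Finset.sum_comm]
  congr 1
  refine Finset.sum_congr rfl fun y _ => ?_
  rw [Finset.sum_mul]
  refine Finset.sum_congr rfl fun j _ => ?_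
  ring

/-! ### The LP support-reduction lemma -/

lemma lp_reduce {ι : Type*} (v : ι → Y → ℝ) (g : ι → ℝ) :
    ∀ (N : ℕ) (s : Finset ι) (p : ι → ℝ), s.card ≤ N → (∀ i ∈ s, 0 ≤ p i) →
      (∀ i ∈ s, ∑ y, v i y = 1) →
      ∃ (s' : Finset ι) (p' : ι → ℝ), s' ⊆ s ∧ s'.card ≤ Fintype.card Y ∧
        (∀ i ∈ s', 0 ≤ p' i) ∧
        (∀ y, ∑ i ∈ s', p' i * v i y = ∑ i ∈ s, p i * v i y) ∧
        (∑ i ∈ s, p i * g i) ≤ ∑ i ∈ s', p' i * g i := by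
  classical
  intro N
  induction N with
  | zero =>
    intro s p hcard hp _
    exact ⟨s, p, Finset.Subset.rfl, le_trans hcard (Nat.zero_le _), hp,
      fun y => rfl, le_rfl⟩
  | succ N ih =>
    intro s p hcard hp hv
    by_cases hbig : s.card ≤ Fintype.card Y
    · exact ⟨s, p, Finset.Subset.rfl, hbig, hp, fun y => rfl, le_rfl⟩
    push_neg at hbig
    -- linear dependence of the columns
    have hdep : ¬ LinearIndependent ℝ (fun i : ↥s => v i) := by
      intro hli
      have h1 := hli.fintype_card_le_finrank
      rw [Fintype.card_coe, Module.finrank_pi] at h1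
      omega
    obtain ⟨c0, hc0sum, i0, hi0⟩ := Fintype.not_linearIndependent_iff.mp hdep
    set c : ι → ℝ := fun i => if h : i ∈ s then c0 ⟨i, h⟩ else 0 with hcdef
    have hcs : ∀ (i : ↥s), c ↑i = c0 i := by
      intro i; simp only [hcdef, dif_pos i.2]
    have hcv : ∀ y, ∑ i ∈ s, c i * v i y = 0 := by
      intro y
      have h2 := congrFun hc0sum y
      rw [Finset.sum_apply] at h2
      calc ∑ i ∈ s, c i * v i y = ∑ i : ↥s, c ↑i * v ↑i y :=
            (Finset.sum_coe_sort s (fun i => c i * v i y)).symm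
        _ = ∑ i : ↥s, (c0 i • v ↑i) y := by
            refine Finset.sum_congr rfl fun i _ => ?_
            rw [hcs i, Pi.smul_apply, smul_eq_mul]
        _ = 0 := by simpa using h2
    have hcsum : ∑ i ∈ s, c i = 0 := by
      calc ∑ i ∈ s, c i = ∑ i ∈ s, ∑ y, c i * v i y := by
            refine Finset.sum_congr rfl fun i hi => ?_
            rw [← Finset.mul_sum, hv i hi, mul_one]
        _ = ∑ y, ∑ i ∈ s, c i * v i y := Finset.sum_comm
        _ = 0 := by simp [hcv]
    have hmain : ∃ d : ι → ℝ, (∀ y, ∑ i ∈ s, d i * v i y = 0) ∧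
        (∑ i ∈ s, d i = 0) ∧ (0 ≤ ∑ i ∈ s, d i * g i) ∧
        ∃ j ∈ s, d j ≠ 0 := by
      rcases le_or_gt 0 (∑ i ∈ s, c i * g i) with h | h
      · exact ⟨c, hcv, hcsum, h, i0, i0.2, by rw [hcs i0]; exact hi0⟩
      · refine ⟨fun i => -c i, fun y => ?_, ?_, ?_, i0, i0.2, ?_⟩
        · simp only [neg_mul]
          rw [Finset.sum_neg_distrib, hcv y, neg_zero]
        · rw [Finset.sum_neg_distrib, hcsum, neg_zero]
        · simp only [neg_mul]
          rw [Finset.sum_neg_distrib]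
          linarith
        · simp only []
          rw [hcs i0]
          exact neg_ne_zero.mpr hi0
    obtain ⟨d, hdv, hdsum, hdg, j0, hj0s, hj0⟩ := hmain
    have hneg : ∃ i ∈ s, d i < 0 := by
      by_contra hno
      push_neg at hno
      have h3 : ∀ i ∈ s, d i = 0 := (Finset.sum_eq_zero_iff_of_nonneg hno).mp hdsum
      exact hj0 (h3 j0 hj0s)
    set T := s.filter (fun i => d i < 0) with hTdef
    have hTne : T.Nonempty := by
      obtain ⟨i, his, hdi⟩ := hneg
      exact ⟨i, Finset.mem_filter.2 ⟨his, hdi⟩⟩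
    set t0 := T.inf' hTne (fun i => p i / (-d i)) with ht0def
    have ht0nn : 0 ≤ t0 := by
      refine Finset.le_inf' hTne _ fun i hi => ?_
      have h4 := Finset.mem_filter.mp hi
      exact div_nonneg (hp i h4.1) (by linarith [h4.2])
    obtain ⟨j, hjT, hjmin⟩ := Finset.exists_mem_eq_inf' hTne (fun i => p i / (-d i))
    have hj_s : j ∈ s := (Finset.mem_filter.mp hjT).1
    have hjd : d j < 0 := (Finset.mem_filter.mp hjT).2
    set p2 : ι → ℝ := fun i => p i + t0 * d i with hp2def
    have hp2nn : ∀ i ∈ s, 0 ≤ p2 i := by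
      intro i hi
      rcases lt_or_ge (d i) 0 with hdi | hdi
      · have hiT : i ∈ T := Finset.mem_filter.2 ⟨hi, hdi⟩
        have h5 : t0 ≤ p i / (-d i) := Finset.inf'_le _ hiT
        have hpos : 0 < -d i := by linarith
        rw [le_div_iff₀ hpos] at h5
        simp only [hp2def]
        nlinarith
      · have h6 : 0 ≤ t0 * d i := mul_nonneg ht0nn hdi
        have h7 := hp i hi
        simp only [hp2def]
        linarith
    have hp2j : p2 j = 0 := by
      have hdj : d j ≠ 0 := ne_of_lt hjd
      have hj1 : p2 j = p j + t0 * d j := rfl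
      rw [hj1, ht0def, hjmin, div_neg, neg_mul, div_mul_cancel₀ _ hdj,
        add_neg_cancel]
    have hcard' : (s.erase j).card ≤ N := by
      rw [Finset.card_erase_of_mem hj_s]
      omega
    obtain ⟨s', p', hsub, hcard'', hp'nn, hq', hg'⟩ :=
      ih (s.erase j) p2 hcard'
        (fun i hi => hp2nn i (Finset.mem_of_mem_erase hi))
        (fun i hi => hv i (Finset.mem_of_mem_erase hi))
    have herase : ∀ f : ι → ℝ, f j = 0 →
        ∑ i ∈ s.erase j, f i = ∑ i ∈ s, f i := by
      intro f hf
      exact Finset.sum_erase _ hf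
    have hsplit : ∀ u : ι → ℝ, ∑ i ∈ s, p2 i * u i
        = ∑ i ∈ s, p i * u i + t0 * ∑ i ∈ s, d i * u i := by
      intro u
      rw [Finset.mul_sum, ← Finset.sum_add_distrib]
      refine Finset.sum_congr rfl fun i _ => ?_
      simp only [hp2def]
      ring
    refine ⟨s', p', hsub.trans (Finset.erase_subset j s), hcard'', hp'nn, ?_, ?_⟩
    · intro y
      rw [hq' y, herase _ (by rw [hp2j, zero_mul]), hsplit, hdv y, mul_zero,
        add_zero]
    · have h8 : ∑ i ∈ s.erase j, p2 i * g i = ∑ i ∈ s, p2 i * g i :=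
        herase _ (by rw [hp2j, zero_mul])
      have h9 := hsplit g
      have h10 : 0 ≤ t0 * ∑ i ∈ s, d i * g i := mul_nonneg ht0nn hdg
      have h11 : ∑ i ∈ s, p i * g i ≤ ∑ i ∈ s.erase j, p2 i * g i := by
        rw [h8, h9]; linarith
      linarith

/-! ### Packing a small-support combination into a `Fin n`-indexed one -/

lemma pack {X : Type*} {G : Set X} {x₀ : X} (hx₀ : x₀ ∈ G) :
    ∀ (n : ℕ) {ι : Type*} (s : Finset ι) (ξ : ι → X) (p : ι → ℝ), s.card ≤ n →
      (∀ i ∈ s, ξ i ∈ G) → (∀ i ∈ s, 0 ≤ p i) →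
      ∃ (xx : Fin n → X) (pp : Fin n → ℝ), (∀ j, xx j ∈ G) ∧ (∀ j, 0 ≤ pp j) ∧
        ∀ f : X → ℝ, ∑ j, pp j * f (xx j) = ∑ i ∈ s, p i * f (ξ i) := by
  intro n
  induction n with
  | zero =>
    intro ι s ξ p hcard _ _
    have hs : s = ∅ := Finset.card_eq_zero.mp (Nat.le_zero.mp hcard)
    subst hs
    exact ⟨fun j => j.elim0, fun _ => 0, fun j => j.elim0, fun j => j.elim0,
      fun f => by simp⟩
  | succ n ih =>
    intro ι s ξ p hcard hξ hp
    classical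
    rcases s.eq_empty_or_nonempty with rfl | ⟨i0, hi0⟩
    · exact ⟨fun _ => x₀, fun _ => 0, fun _ => hx₀, fun _ => le_rfl,
        fun f => by simp⟩
    · have hcard' : (s.erase i0).card ≤ n := by
        rw [Finset.card_erase_of_mem hi0]
        omega
      obtain ⟨xx, pp, h1, h2, h3⟩ := ih (s.erase i0) ξ p hcard'
        (fun i hi => hξ i (Finset.mem_of_mem_erase hi))
        (fun i hi => hp i (Finset.mem_of_mem_erase hi))
      refine ⟨Fin.cons (ξ i0) xx, Fin.cons (p i0) pp, ?_, ?_, ?_⟩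
      · intro j
        refine Fin.cases (hξ i0 hi0) (fun j => h1 j) j
      · intro j
        refine Fin.cases (hp i0 hi0) (fun j => h2 j) j
      · intro f
        rw [Fin.sum_univ_succ]
        simp only [Fin.cons_zero, Fin.cons_succ]
        rw [h3 f]
        exact Finset.add_sum_erase s (fun i => p i * f (ξ i)) hi0

end Aux

/-- For any channel with input alphabet `Δ_k` and finite output alphabet `Y` whose
transition probabilities `x ↦ W(y|x)` are continuous in `x`, there exists a
capacity-achieving input distribution supported on at most `|Y|` points of `Δ_k`. -/
theorem exists_CAID_finite_support {k : ℕ} (hk : 0 < k) {Y : Type*} [Fintype Y]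
    (W : Y → (Fin k → ℝ) → ℝ)
    (hWcont : ∀ y, Continuous (W y))
    (hWpos : ∀ y, ∀ x ∈ simplex k, 0 ≤ W y x)
    (hWsum : ∀ x ∈ simplex k, ∑ y, W y x = 1) :
    ∃ μ : Measure (Fin k → ℝ), IsProbabilityMeasure μ ∧
      (∃ S : Finset (Fin k → ℝ), ↑S ⊆ simplex k ∧ S.card ≤ Fintype.card Y ∧
        μ (↑S)ᶜ = 0) ∧
      (∀ ν : Measure (Fin k → ℝ), IsProbabilityMeasure ν → ν (simplex k)ᶜ = 0 →
        MIW W ν ≤ MIW W μ) := by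
  classical
  set n := Fintype.card Y with hn
  -- a base point of the simplex
  have hx₀ : (fun _ : Fin k => (k : ℝ)⁻¹) ∈ simplex k := by
    constructor
    · intro i
      positivity
    · rw [Finset.sum_const, Finset.card_univ, Fintype.card_fin, nsmul_eq_mul]
      field_simp
  set x₀ : Fin k → ℝ := fun _ => (k : ℝ)⁻¹ with hx₀def
  have hnpos : 0 < n := by
    rcases Nat.eq_zero_or_pos n with h0 | h
    · exfalso
      have h1 := hWsum x₀ hx₀
      have : (Finset.univ : Finset Y) = ∅ := by
        rw [← Finset.card_eq_zero]
        simpa [hn] using h0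
      rw [this, Finset.sum_empty] at h1
      norm_num at h1
    · exact h
  -- the objective function on n-point configurations
  set F : ((Fin n → (Fin k → ℝ)) × (Fin n → ℝ)) → ℝ := fun z =>
    (∑ j, z.2 j * gW W (z.1 j))
      - ∑ y, (∑ j, z.2 j * W y (z.1 j)) * Real.log (∑ j, z.2 j * W y (z.1 j))
    with hFdef
  set K : Set ((Fin n → (Fin k → ℝ)) × (Fin n → ℝ)) :=
    (Set.univ.pi fun _ : Fin n => simplex k) ×ˢ stdSimplex ℝ (Fin n) with hKdef
  have hKc : IsCompact K :=
    (isCompact_univ_pi fun _ => isCompact_simplex).prod (isCompact_stdSimplex _ _)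
  have hKne : K.Nonempty := by
    refine ⟨(fun _ => x₀, fun _ => (n : ℝ)⁻¹), ?_, ?_⟩
    · intro j _
      exact hx₀
    · constructor
      · intro j
        positivity
      · rw [Finset.sum_const, Finset.card_univ, Fintype.card_fin, nsmul_eq_mul]
        field_simp
  have hQcont : ∀ y : Y, Continuous fun z : (Fin n → (Fin k → ℝ)) × (Fin n → ℝ) =>
      ∑ j, z.2 j * W y (z.1 j) := by
    intro y
    refine continuous_finset_sum _ fun j _ => ?_
    exact ((continuous_apply j).comp continuous_snd).mul
      ((hWcont y).comp ((continuous_apply j).comp continuous_fst))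
  have hFc : Continuous F := by
    refine Continuous.sub ?_ ?_
    · refine continuous_finset_sum _ fun j _ => ?_
      exact ((continuous_apply j).comp continuous_snd).mul
        ((continuous_gW hWcont).comp ((continuous_apply j).comp continuous_fst))
    · exact continuous_finset_sum _ fun y _ =>
        Real.continuous_mul_log.comp (hQcont y)
  obtain ⟨z, hzK, hzmax⟩ := hKc.exists_isMaxOn hKne hFc.continuousOn
  have hzx : ∀ j, z.1 j ∈ simplex k := fun j => hzK.1 j (Set.mem_univ j)
  have hzp : z.2 ∈ stdSimplex ℝ (Fin n) := hzK.2
  refine ⟨atomM z.1 z.2, atomM_prob z.1 z.2 hzp, ?_, ?_⟩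
  · refine ⟨Finset.image z.1 Finset.univ, ?_, ?_, ?_⟩
    · intro a ha
      simp only [Finset.coe_image, Set.mem_image] at ha
      obtain ⟨j, _, rfl⟩ := ha
      exact hzx j
    · calc (Finset.image z.1 Finset.univ).card ≤ Finset.univ.card :=
            Finset.card_image_le
        _ = n := by rw [Finset.card_univ, Fintype.card_fin]
    · exact atomM_apply_compl z.1 z.2 fun j =>
        Finset.mem_image_of_mem z.1 (Finset.mem_univ j)
  · intro ν hνP hνs
    haveI := hνP
    have hae : ∀ᵐ x ∂ν, x ∈ simplex k := by
      rw [ae_iff]; exact hνs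
    -- the embedded channel map
    set h : (Fin k → ℝ) → (Y → ℝ) × ℝ :=
      fun x => ((fun y => W y x), gW W x) with hhdef
    have hhcont : Continuous h := by
      refine Continuous.prodMk ?_ (continuous_gW hWcont)
      exact continuous_pi fun y => hWcont y
    set T : Set ((Y → ℝ) × ℝ) := h '' simplex k with hTdef
    have hint : Integrable h ν := integrable_of_cont ν hae hhcont
    have hmem : (∫ x, h x ∂ν) ∈ closure (convexHull ℝ T) := by
      refine Convex.integral_mem ((convex_convexHull ℝ T).closure)
        isClosed_closure ?_ hint
      exact hae.mono fun x hx =>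
        subset_closure (subset_convexHull ℝ T (Set.mem_image_of_mem h hx))
    set A : (Y → ℝ) × ℝ → ℝ :=
      fun e => e.2 - ∑ y, e.1 y * Real.log (e.1 y) with hAdef
    have hAc : Continuous A := by
      refine Continuous.sub continuous_snd ?_
      exact continuous_finset_sum _ fun y _ =>
        Real.continuous_mul_log.comp ((continuous_apply y).comp continuous_fst)
    -- Main claim: A is bounded by F z on the convex hull of T
    have hCH : ∀ e ∈ convexHull ℝ T, A e ≤ F z := by
      intro e he
      rw [_root_.convexHull_eq] at he
      obtain ⟨ι, t, wgt, zf, hw0, hw1, hzT, hcm⟩ := he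
      rw [Finset.centerMass_eq_of_sum_1 _ _ hw1] at hcm
      -- choose preimages in the simplex
      have hchoice : ∀ i : ι, ∃ x : Fin k → ℝ,
          i ∈ t → (x ∈ simplex k ∧ h x = zf i) := by
        intro i
        by_cases hi : i ∈ t
        · obtain ⟨x, hx1, hx2⟩ := hzT i hi
          exact ⟨x, fun _ => ⟨hx1, hx2⟩⟩
        · exact ⟨x₀, fun h' => absurd h' hi⟩
      choose ξ hξ using hchoice
      have he1 : ∀ y, e.1 y = ∑ i ∈ t, wgt i * W y (ξ i) := by
        intro y
        rw [← hcm, Prod.fst_sum, Finset.sum_apply]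
        refine Finset.sum_congr rfl fun i hi => ?_
        rw [Prod.smul_fst, Pi.smul_apply, smul_eq_mul, ← (hξ i hi).2]
      have he2 : e.2 = ∑ i ∈ t, wgt i * gW W (ξ i) := by
        rw [← hcm, Prod.snd_sum]
        refine Finset.sum_congr rfl fun i hi => ?_
        rw [Prod.smul_snd, smul_eq_mul, ← (hξ i hi).2]
      -- LP reduction
      obtain ⟨s', p', hsub, hcard, hp'nn, hq', hg'⟩ :=
        lp_reduce (fun i y => W y (ξ i)) (fun i => gW W (ξ i)) t.card t wgt
          le_rfl hw0 (fun i hi => hWsum (ξ i) (hξ i hi).1)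
      -- pack into Fin n
      obtain ⟨xx, pp, hxx, hpp0, hsum⟩ :=
        pack hx₀ n s' ξ p' (le_trans hcard (le_of_eq hn.symm))
          (fun i hi => (hξ i (hsub hi)).1) hp'nn
      have hppW : ∀ y, ∑ j, pp j * W y (xx j) = e.1 y := by
        intro y
        rw [hsum (fun x => W y x), hq' y, he1 y]
      have hppg : e.2 ≤ ∑ j, pp j * gW W (xx j) := by
        rw [hsum (gW W), he2]
        exact hg'
      have hppsum : ∑ j, pp j = 1 := by
        have hs1 : ∑ j, pp j = ∑ i ∈ s', p' i := by
          have := hsum (fun _ => 1)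
          simpa using this
        rw [hs1]
        have hs2 : ∑ i ∈ s', p' i = ∑ i ∈ s', p' i * ∑ y, W y (ξ i) := by
          refine Finset.sum_congr rfl fun i hi => ?_
          rw [hWsum (ξ i) (hξ i (hsub hi)).1, mul_one]
        have hs3 : ∑ i ∈ t, wgt i = ∑ i ∈ t, wgt i * ∑ y, W y (ξ i) := by
          refine Finset.sum_congr rfl fun i hi => ?_
          rw [hWsum (ξ i) (hξ i hi).1, mul_one]
        rw [hs2]
        simp_rw [Finset.mul_sum]
        rw [Finset.sum_comm]
        have hs4 : ∀ y, ∑ i ∈ s', p' i * W y (ξ i) = ∑ i ∈ t, wgt i * W y (ξ i) :=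
          hq'
        rw [Finset.sum_congr rfl fun y _ => hs4 y, Finset.sum_comm]
        calc ∑ i ∈ t, ∑ y, wgt i * W y (ξ i)
            = ∑ i ∈ t, wgt i * ∑ y, W y (ξ i) := by
              refine Finset.sum_congr rfl fun i _ => ?_
              rw [Finset.mul_sum]
          _ = ∑ i ∈ t, wgt i := hs3.symm
          _ = 1 := hw1
      have hKmem : (xx, pp) ∈ K := by
        refine ⟨?_, hpp0, hppsum⟩
        intro j _
        exact hxx j
      have hFxx : A e ≤ F (xx, pp) := by
        simp only [hFdef, hAdef]
        have : ∀ y, (∑ j, pp j * W y (xx j)) = e.1 y := hppW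
        simp only [this]
        linarith [hppg]
      exact le_trans hFxx (hzmax hKmem)
    have hclosure : A (∫ x, h x ∂ν) ≤ F z := by
      have hsubset : closure (convexHull ℝ T) ⊆ {e | A e ≤ F z} :=
        closure_minimal hCH (isClosed_le hAc continuous_const)
      exact hsubset hmem
    -- identify A (∫ h) with MIW ν
    have hfst : (∫ x, h x ∂ν).1 = fun y => outDistW W ν y := by
      have h2 : Integrable (fun x => (h x).1) ν :=
        integrable_of_cont ν hae (continuous_pi fun y => hWcont y)
      have h1 : (∫ x, h x ∂ν).1 = ∫ x, (h x).1 ∂ν :=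
        ((ContinuousLinearMap.fst ℝ (Y → ℝ) ℝ).integral_comp_comm hint).symm
      funext y
      have h3 : (∫ x, (h x).1 ∂ν) y = ∫ x, (h x).1 y ∂ν :=
        ((ContinuousLinearMap.proj (R := ℝ) (φ := fun _ : Y => ℝ)
          y).integral_comp_comm h2).symm
      rw [h1, h3]
      rfl
    have hsnd : (∫ x, h x ∂ν).2 = ∫ x, gW W x ∂ν := by
      have h1 : (∫ x, h x ∂ν).2 = ∫ x, (h x).2 ∂ν :=
        ((ContinuousLinearMap.snd ℝ (Y → ℝ) ℝ).integral_comp_comm hint).symm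
      rw [h1]
    have hMIWν : MIW W ν = A (∫ x, h x ∂ν) := by
      rw [MIW_eq W hWcont hWpos ν hνs]
      simp only [hAdef, hfst, hsnd]
    have hMIWμ : MIW W (atomM z.1 z.2) = F z := by
      rw [MIW_atomM W hWpos z.1 z.2 hzx hzp]
    rw [hMIWν, hMIWμ]
    exact hclosure
end

section
/- There exists a capacity-achieving input distribution for the multinomial channel with n reads and k letters that is atomic with support size at most C(n+k-1, k-1), i.e., of the form f*(x) = \sum_{i=1}^m p_i \delta(x - x^{(i)}) with m \leq C(n+k-1, k-1). -/
open Finset MeasureTheory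

/-- The multinomial transition probability `P(y|x)`. -/
noncomputable def multiP (n : ℕ) {k : ℕ} (y : Fin k → ℕ) (x : Fin k → ℝ) : ℝ :=
  ((n.factorial : ℝ) / ∏ j, ((y j).factorial : ℝ)) * ∏ j, x j ^ y j

/-- The output distribution induced by an input distribution `μ` on `Δ_k`. -/
noncomputable def outDistM (n k : ℕ) (μ : Measure (Fin k → ℝ)) (y : Fin k → ℕ) : ℝ :=
  ∫ x, multiP n y x ∂μ

/-- Mutual information `I(X;Y)` of the `n`-read multinomial channel when the input `X`
has distribution `μ`, written as the average KL divergence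
`∫ D(P_{Y|X=x} ‖ P_Y) dμ(x)`. -/
noncomputable def MI (n k : ℕ) (μ : Measure (Fin k → ℝ)) : ℝ :=
  ∫ x, ∑ y ∈ Finset.Nat.antidiagonalTuple k n,
    multiP n y x * Real.log (multiP n y x / outDistM n k μ y) ∂μ

namespace CAID

variable (n k : ℕ)

abbrev Yf : Finset (Fin k → ℕ) := Finset.Nat.antidiagonalTuple k n

def y₀ : Fin k → ℕ := fun j => if j.1 = 0 then n else 0

lemma y₀_mem (hk : 0 < k) : y₀ n k ∈ Yf n k := by
  rw [Finset.Nat.mem_antidiagonalTuple]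
  rw [show (y₀ n k) = fun j => if j = (⟨0, hk⟩ : Fin k) then n else 0 from by
    funext j; simp [y₀, Fin.ext_iff]]
  simp

def Y' : Finset (Fin k → ℕ) := (Yf n k).erase (y₀ n k)

abbrev V := ℝ × ({ y // y ∈ Y' n k } → ℝ)

noncomputable def g (x : Fin k → ℝ) : ℝ :=
  ∑ y ∈ Yf n k, multiP n y x * Real.log (multiP n y x)

noncomputable def Φ (x : Fin k → ℝ) : V n k := (g n k x, fun y => multiP n y.1 x)

noncomputable def Gf (v : V n k) : ℝ :=
  v.1 + Real.negMulLog (1 - ∑ y, v.2 y) + ∑ y, Real.negMulLog (v.2 y)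

lemma continuous_multiP (y : Fin k → ℕ) : Continuous (fun x : Fin k → ℝ => multiP n y x) := by
  unfold multiP
  exact continuous_const.mul (continuous_finset_prod _ fun j _ => (continuous_apply j).pow _)

lemma continuous_g : Continuous (g n k) := by
  have : g n k = fun x => ∑ y ∈ Yf n k, -Real.negMulLog (multiP n y x) := by
    funext x
    refine Finset.sum_congr rfl fun y _ => ?_
    simp [Real.negMulLog]
  rw [this]
  exact continuous_finset_sum _ fun y _ =>
    (Real.continuous_negMulLog.comp (continuous_multiP n k y)).neg

lemma continuous_Φ : Continuous (Φ n k) :=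
  (continuous_g n k).prodMk (continuous_pi fun y => continuous_multiP n k y.1)

lemma continuous_Gf : Continuous (Gf n k) := by
  refine (continuous_fst.add (Real.continuous_negMulLog.comp
    (continuous_const.sub (continuous_finset_sum _ fun y _ => ?_)))).add
    (continuous_finset_sum _ fun y _ => Real.continuous_negMulLog.comp ?_)
  · exact (continuous_apply y).comp continuous_snd
  · exact (continuous_apply y).comp continuous_snd

lemma isCompact_simplex : IsCompact (simplex k) := isCompact_stdSimplex ℝ (Fin k)

lemma isClosed_simplex : IsClosed (simplex k) := isClosed_stdSimplex ℝ (Fin k)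

lemma simplex_nonempty (hk : 0 < k) : (simplex k).Nonempty :=
  ⟨Pi.single (⟨0, hk⟩ : Fin k) 1, single_mem_stdSimplex ℝ _⟩

variable {ν : Measure (Fin k → ℝ)}

lemma ae_mem_simplex [IsProbabilityMeasure ν] (hν : ν (simplex k)ᶜ = 0) :
    ∀ᵐ x ∂ν, x ∈ simplex k := by
  rw [MeasureTheory.ae_iff]
  exact hν

lemma integrable_cont [IsProbabilityMeasure ν] (hν : ν (simplex k)ᶜ = 0)
    {F : Type*} [NormedAddCommGroup F] {f : (Fin k → ℝ) → F} (hf : Continuous f) :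
    Integrable f ν := by
  obtain ⟨M, hM⟩ := (isCompact_simplex k).exists_bound_of_continuousOn hf.continuousOn
  refine ⟨hf.aestronglyMeasurable, HasFiniteIntegral.of_bounded (C := M) ?_⟩
  filter_upwards [ae_mem_simplex k hν] with x hx using hM x hx

lemma multiP_nonneg {y : Fin k → ℕ} {x : Fin k → ℝ} (hx : x ∈ simplex k) :
    0 ≤ multiP n y x := by
  refine mul_nonneg (div_nonneg (Nat.cast_nonneg _)
    (Finset.prod_nonneg fun j _ => Nat.cast_nonneg _))
    (Finset.prod_nonneg fun j _ => pow_nonneg (hx.1 j) _)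

lemma sum_multiP (x : Fin k → ℝ) : ∑ y ∈ Yf n k, multiP n y x = (∑ i, x i) ^ n := by
  classical
  rw [show Yf n k = Finset.univ.piAntidiag n from
    (Finset.piAntidiag_univ_fin_eq_antidiagonalTuple n k).symm,
    Finset.sum_pow_eq_sum_piAntidiag]
  refine Finset.sum_congr rfl fun y hy => ?_
  have hsum : ∑ i, y i = n := by
    rw [Finset.mem_piAntidiag] at hy
    exact hy.1
  have hspec := Nat.multinomial_spec Finset.univ y
  rw [hsum] at hspec
  have hcast : ((Nat.multinomial Finset.univ y : ℕ) : ℝ)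
      = (n.factorial : ℝ) / ∏ j, ((y j).factorial : ℝ) := by
    rw [eq_div_iff (by positivity), mul_comm]
    rw [← Nat.cast_prod, ← Nat.cast_mul, hspec]
  rw [multiP, hcast]

lemma sum_outDist [IsProbabilityMeasure ν] (hν : ν (simplex k)ᶜ = 0) :
    ∑ y ∈ Yf n k, outDistM n k ν y = 1 := by
  unfold outDistM
  rw [← integral_finset_sum _ (fun y _ => integrable_cont k hν (continuous_multiP n k y))]
  rw [show ∫ x, ∑ y ∈ Yf n k, multiP n y x ∂ν = ∫ _x, (1:ℝ) ∂ν from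
    integral_congr_ae (by
      filter_upwards [ae_mem_simplex k hν] with x hx
      rw [sum_multiP, hx.2, one_pow])]
  simp

end CAID

namespace CAID
variable (n k : ℕ) {ν : Measure (Fin k → ℝ)}

lemma MI_eq [IsProbabilityMeasure ν] (hν : ν (simplex k)ᶜ = 0) :
    MI n k ν = (∫ x, g n k x ∂ν) + ∑ y ∈ Yf n k, Real.negMulLog (outDistM n k ν y) := by
  classical
  set Q : (Fin k → ℕ) → ℝ := outDistM n k ν with hQ
  have hPint : ∀ y : Fin k → ℕ, Integrable (fun x => multiP n y x) ν :=
    fun y => integrable_cont k hν (continuous_multiP n k y)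
  have hzero : ∀ y ∈ Yf n k, Q y = 0 → ∀ᵐ x ∂ν, multiP n y x = 0 := by
    intro y _ h0
    have hnn : 0 ≤ᵐ[ν] fun x => multiP n y x := by
      filter_upwards [ae_mem_simplex k hν] with x hx using multiP_nonneg n k hx
    have := (integral_eq_zero_iff_of_nonneg_ae hnn (hPint y)).1 h0
    filter_upwards [this] with x hx using hx
  have hae : ∀ᵐ x ∂ν, ∀ y ∈ Yf n k, Q y = 0 → multiP n y x = 0 := by
    rw [Filter.eventually_all_finset]
    intro y hy
    by_cases h0 : Q y = 0
    · filter_upwards [hzero y hy h0] with x hx using fun _ => hx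
    · filter_upwards with x using fun h => absurd h h0
  have key : (fun x => ∑ y ∈ Yf n k, multiP n y x * Real.log (multiP n y x / Q y))
      =ᵐ[ν] fun x => g n k x - ∑ y ∈ Yf n k, Real.log (Q y) * multiP n y x := by
    filter_upwards [hae] with x hx
    rw [g, ← Finset.sum_sub_distrib]
    refine Finset.sum_congr rfl fun y hy => ?_
    by_cases h0 : Q y = 0
    · rw [hx y hy h0]; simp
    · by_cases hP : multiP n y x = 0
      · simp [hP]
      · rw [Real.log_div hP h0]; ring
  have hMI : MI n k ν = ∫ x, (g n k x - ∑ y ∈ Yf n k, Real.log (Q y) * multiP n y x) ∂ν :=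
    integral_congr_ae key
  rw [hMI, integral_sub (integrable_cont k hν (continuous_g n k))
    (integrable_finset_sum _ fun y _ => (hPint y).const_mul _)]
  rw [integral_finset_sum _ fun y _ => (hPint y).const_mul _]
  have hterm : ∀ y ∈ Yf n k, (∫ a, Real.log (Q y) * multiP n y a ∂ν) = - Real.negMulLog (Q y) := by
    intro y _
    rw [integral_const_mul]
    have : (∫ x, multiP n y x ∂ν) = Q y := rfl
    rw [this, Real.negMulLog]
    ring
  rw [Finset.sum_congr rfl hterm, Finset.sum_neg_distrib]
  ring

lemma MI_eq_Gf (hk : 0 < k) [IsProbabilityMeasure ν] (hν : ν (simplex k)ᶜ = 0) :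
    MI n k ν = Gf n k (∫ x, Φ n k x ∂ν) := by
  have hint : Integrable (Φ n k) ν := integrable_cont k hν (continuous_Φ n k)
  have hfst : (∫ x, Φ n k x ∂ν).1 = ∫ x, g n k x ∂ν := by
    exact ((ContinuousLinearMap.fst ℝ ℝ _).integral_comp_comm hint).symm
  have hsnd : ∀ y : { y // y ∈ Y' n k }, (∫ x, Φ n k x ∂ν).2 y = outDistM n k ν y.1 := by
    intro y
    exact (((ContinuousLinearMap.proj y).comp
      (ContinuousLinearMap.snd ℝ ℝ _)).integral_comp_comm hint).symm
  have hsum' : ∑ y : { y // y ∈ Y' n k }, (∫ x, Φ n k x ∂ν).2 y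
      = ∑ y ∈ Y' n k, outDistM n k ν y := by
    rw [Finset.sum_congr rfl fun y _ => hsnd y]
    exact Finset.sum_coe_sort (Y' n k) (outDistM n k ν)
  have herase : ∑ y ∈ Y' n k, outDistM n k ν y + outDistM n k ν (y₀ n k)
      = ∑ y ∈ Yf n k, outDistM n k ν y :=
    Finset.sum_erase_add _ _ (y₀_mem n k hk)
  have hQy0 : 1 - ∑ y ∈ Y' n k, outDistM n k ν y = outDistM n k ν (y₀ n k) := by
    rw [← sum_outDist n k hν, ← herase]; ring
  rw [Gf, hfst, hsum', hQy0]
  rw [Finset.sum_congr rfl fun y (_ : y ∈ Finset.univ) => congrArg Real.negMulLog (hsnd y)]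
  rw [Finset.sum_coe_sort (Y' n k) (fun y => Real.negMulLog (outDistM n k ν y))]
  rw [MI_eq n k hν]
  rw [← Finset.sum_erase_add _ _ (y₀_mem n k hk)]
  simp only [Y']
  ring

end CAID


lemma card_antidiagonalTuple (n k : ℕ) (hk : 0 < k) :
    (Finset.Nat.antidiagonalTuple k n).card = (n + k - 1).choose (k - 1) := by
  classical
  have hequiv : {f // f ∈ Finset.Nat.antidiagonalTuple k n} ≃ Sym (Fin k) n := by
    refine
      { toFun := fun f => ⟨∑ i, Multiset.replicate (f.1 i) i, ?_⟩
        invFun := fun s => ⟨fun i => s.1.count i, ?_⟩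
        left_inv := ?_
        right_inv := ?_ }
    · have := (Finset.Nat.mem_antidiagonalTuple).1 f.2
      simp [Multiset.card_replicate, ← this]
    · rw [Finset.Nat.mem_antidiagonalTuple]
      have := s.2
      rw [Multiset.sum_count_eq_card (fun a _ => Finset.mem_univ a)]
      exact s.2
    · rintro ⟨f, hf⟩
      ext i
      simp [Multiset.count_sum', Multiset.count_replicate]
    · rintro ⟨m, hm⟩
      ext1
      show ∑ i : Fin k, Multiset.replicate (m.count i) i = m
      rw [show (∑ i : Fin k, Multiset.replicate (m.count i) i)
          = ∑ i ∈ m.toFinset, Multiset.replicate (m.count i) i from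
        (Finset.sum_subset (Finset.subset_univ _) (by
          intro x _ hx
          rw [Multiset.count_eq_zero_of_notMem (by simpa using hx)]
          rfl)).symm]
      simpa [← Multiset.nsmul_singleton] using m.toFinset_sum_count_nsmul_eq
  have h1 : (Finset.Nat.antidiagonalTuple k n).card = Fintype.card (Sym (Fin k) n) := by
    rw [← Fintype.card_coe]
    exact Fintype.card_congr hequiv
  rw [h1, Sym.card_sym_eq_choose, Fintype.card_fin]
  have h2 : k + n - 1 = n + k - 1 := by omega
  rw [h2]
  have h3 : (n + k - 1) - n = k - 1 := by omega
  rw [← h3]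
  exact (Nat.choose_symm (by omega)).symm


theorem sum_extend_zero {i : Type*} {x : Type*} {M : Type*} [Fintype i] [Fintype x]
    [AddCommMonoid M] {f : i → x} (hfinj : Function.Injective f) (F : x → M)
    (hF : ∀ j, ¬(∃ a, f a = j) → F j = 0) : ∑ j, F j = ∑ a, F (f a) := by
  classical
  rw [show ∑ a : i, F (f a) = ∑ j ∈ Finset.univ.image f, F j from
    (Finset.sum_image fun p _ q _ h => hfinj h).symm]
  exact (Finset.sum_subset (Finset.subset_univ _) fun j _ hj =>
    hF j fun hex => hj (Finset.mem_image.mpr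
      ⟨hex.choose, Finset.mem_univ _, hex.choose_spec⟩)).symm

theorem hull_eq_image {E : Type*} [NormedAddCommGroup E] [NormedSpace ℝ E]
    [FiniteDimensional ℝ E] {C : Set E} (hC : C.Nonempty) :
    convexHull ℝ C =
      (fun p : (Fin (Module.finrank ℝ E + 1) → ℝ) × (Fin (Module.finrank ℝ E + 1) → E) =>
          ∑ i, p.1 i • p.2 i) ''
        (stdSimplex ℝ (Fin (Module.finrank ℝ E + 1)) ×ˢ Set.univ.pi fun _ => C) := by
  classical
  set MM := Module.finrank ℝ E + 1
  apply Set.Subset.antisymm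
  · intro v hv
    obtain ⟨ι, hfin, z, w, hzC, hind, hpos, hsum, hcomb⟩ :=
      eq_pos_convex_span_of_mem_convexHull hv
    obtain ⟨c0, hc0⟩ := hC
    have hcard : Fintype.card ι ≤ MM :=
      le_trans hind.card_le_finrank_succ
        (Nat.add_le_add_right (Submodule.finrank_le _) 1)
    let f : ι → Fin MM := fun i => Fin.castLE hcard (Fintype.equivFin ι i)
    have hfinj : Function.Injective f :=
      (Fin.castLE_injective hcard).comp (Fintype.equivFin ι).injective
    let w' : Fin MM → ℝ := fun j => if h : ∃ i, f i = j then w h.choose else 0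
    let z' : Fin MM → E := fun j => if h : ∃ i, f i = j then z h.choose else c0
    have hwf : ∀ i, w' (f i) = w i := by
      intro i
      have hex : ∃ i', f i' = f i := ⟨i, rfl⟩
      simp only [w', dif_pos hex]
      exact congrArg w (hfinj hex.choose_spec)
    have hzf : ∀ i, z' (f i) = z i := by
      intro i
      have hex : ∃ i', f i' = f i := ⟨i, rfl⟩
      simp only [z', dif_pos hex]
      exact congrArg z (hfinj hex.choose_spec)
    refine ⟨⟨w', z'⟩, ⟨⟨fun j => ?_, ?_⟩, fun j _ => ?_⟩, ?_⟩
    · by_cases h : ∃ i, f i = j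
      · simp only [w', dif_pos h]; exact le_of_lt (hpos _)
      · simp only [w', dif_neg h]; exact le_rfl
    · rw [sum_extend_zero hfinj w' (fun j hj => by simp only [w', dif_neg hj])]
      rw [Finset.sum_congr rfl fun i _ => hwf i]
      exact hsum
    · by_cases h : ∃ i, f i = j
      · simp only [z', dif_pos h]; exact hzC (Set.mem_range_self _)
      · simp only [z', dif_neg h]; exact hc0
    · show ∑ j, w' j • z' j = v
      rw [sum_extend_zero hfinj (fun j => w' j • z' j)
        (fun j hj => by simp only [w', dif_neg hj, zero_smul])]
      rw [Finset.sum_congr rfl fun i _ => by rw [hwf i, hzf i]]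
      exact hcomb
  · rintro v ⟨⟨ww, zz⟩, ⟨hw, hz⟩, rfl⟩
    show ∑ i, ww i • zz i ∈ convexHull ℝ C
    rw [← Finset.centerMass_eq_of_sum_1 _ zz hw.2]
    exact Finset.centerMass_mem_convexHull _ (fun i _ => hw.1 i)
      (by rw [hw.2]; norm_num) (fun i _ => hz i (Set.mem_univ i))


/-- There exists a capacity-achieving input distribution for the multinomial channel with
`n` reads and `k` letters that is atomic of the form `∑ i p_i δ_{x^(i)}` with support
size `m ≤ C(n + k - 1, k - 1)`. -/
theorem exists_atomic_CAID (n k : ℕ) (hn : 0 < n) (hk : 0 < k) :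
    ∃ (m : ℕ) (x : Fin m → Fin k → ℝ) (p : Fin m → ENNReal)
      (μ : Measure (Fin k → ℝ)),
      m ≤ (n + k - 1).choose (k - 1) ∧
      (∀ i, x i ∈ simplex k) ∧ ∑ i, p i = 1 ∧
      μ = ∑ i, p i • Measure.dirac (x i) ∧
      IsProbabilityMeasure μ ∧
      (∀ ν : Measure (Fin k → ℝ), IsProbabilityMeasure ν → ν (simplex k)ᶜ = 0 →
        MI n k ν ≤ MI n k μ) := by
  classical
  set C : Set (CAID.V n k) := CAID.Φ n k '' simplex k with hC
  have hCne : C.Nonempty := (CAID.simplex_nonempty k hk).image _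
  have hCcomp : IsCompact C := (CAID.isCompact_simplex k).image (CAID.continuous_Φ n k)
  set MM := Module.finrank ℝ (CAID.V n k) + 1 with hMM
  set φ : (Fin MM → ℝ) × (Fin MM → CAID.V n k) → CAID.V n k :=
    fun p => ∑ i, p.1 i • p.2 i with hφ
  set T := stdSimplex ℝ (Fin MM) ×ˢ Set.univ.pi fun _ : Fin MM => C with hT
  have hhull : convexHull ℝ C = φ '' T := hull_eq_image hCne
  have hφcont : Continuous φ := continuous_finset_sum _ fun i _ =>
    ((continuous_apply i).comp continuous_fst).smul ((continuous_apply i).comp continuous_snd)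
  have hTcomp : IsCompact T := (isCompact_stdSimplex ℝ _).prod (isCompact_univ_pi fun _ => hCcomp)
  obtain ⟨c0, hc0⟩ := hCne
  have hTne : T.Nonempty :=
    ⟨⟨Pi.single (0 : Fin MM) 1, fun _ => c0⟩,
      ⟨single_mem_stdSimplex ℝ _, fun i _ => hc0⟩⟩
  obtain ⟨p₀, hp₀T, hp₀max⟩ := hTcomp.exists_isMaxOn hTne
    ((CAID.continuous_Gf n k).comp hφcont).continuousOn
  set v := φ p₀ with hv
  have hvA : v ∈ convexHull ℝ C := by rw [hhull]; exact Set.mem_image_of_mem φ hp₀T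
  have hvmax : ∀ u ∈ convexHull ℝ C, CAID.Gf n k u ≤ CAID.Gf n k v := by
    intro u hu
    rw [hhull] at hu
    obtain ⟨q, hq, rfl⟩ := hu
    exact hp₀max hq
  have hNpos : 0 < (CAID.Yf n k).card := Finset.card_pos.mpr ⟨_, CAID.y₀_mem n k hk⟩
  have hfr : Module.finrank ℝ (CAID.V n k) = (CAID.Yf n k).card := by
    rw [Module.finrank_prod, Module.finrank_self, Module.finrank_pi, Fintype.card_coe]
    rw [CAID.Y', Finset.card_erase_of_mem (CAID.y₀_mem n k hk)]
    omega
  obtain ⟨ι, hfin, z, w, hzC, hind, hpos, hsum, hcomb⟩ :=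
    eq_pos_convex_span_of_mem_convexHull hvA
  have hcard1 : Fintype.card ι ≤ Module.finrank ℝ (CAID.V n k) + 1 :=
    le_trans hind.card_le_finrank_succ (Nat.add_le_add_right (Submodule.finrank_le _) 1)
  have hcard : Fintype.card ι ≤ Module.finrank ℝ (CAID.V n k) := by
    by_contra hcon
    have hEq : Fintype.card ι = Module.finrank ℝ (CAID.V n k) + 1 := by omega
    have htot : affineSpan ℝ (Set.range z) = ⊤ :=
      hind.affineSpan_eq_top_iff_card_eq_finrank_add_one.2 hEq
    let b : AffineBasis ι ℝ (CAID.V n k) := ⟨z, hind, htot⟩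
    have hco : ∀ i, b.coord i v = w i := by
      intro i
      have h1 := b.coord_apply_combination_of_mem (Finset.mem_univ i) (w := w) hsum
      rw [show ((affineCombination ℝ Finset.univ ⇑b) w) = v from by
        rw [affineCombination_eq_linear_combination _ _ _ hsum]; exact hcomb] at h1
      exact h1
    have hvint : v ∈ interior (convexHull ℝ C) := by
      refine interior_mono (convexHull_mono hzC) ?_
      show v ∈ interior (convexHull ℝ (Set.range z))
      rw [show Set.range z = Set.range ⇑b from rfl, b.interior_convexHull]
      intro i
      rw [hco i]
      exact hpos i
    rw [mem_interior_iff_mem_nhds, Metric.mem_nhds_iff] at hvint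
    obtain ⟨ε, hε, hball⟩ := hvint
    set u : CAID.V n k := v + (ε/2) • ((1:ℝ), (0 : {y // y ∈ CAID.Y' n k} → ℝ)) with hu
    have huA : u ∈ convexHull ℝ C := by
      apply hball
      rw [Metric.mem_ball, dist_eq_norm]
      rw [show u - v = (ε/2) • ((1:ℝ), (0 : {y // y ∈ CAID.Y' n k} → ℝ)) from by
        rw [hu]; abel]
      rw [norm_smul, Prod.norm_def]
      simp only [norm_one, norm_zero, Real.norm_eq_abs]
      rw [abs_of_pos (by linarith), max_eq_left (by norm_num)]
      linarith
    have h1 : u.1 = v.1 + ε/2 := by simp [hu]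
    have h2 : u.2 = v.2 := by simp [hu]
    have hGu : CAID.Gf n k u = CAID.Gf n k v + ε/2 := by
      rw [CAID.Gf, CAID.Gf, h1, h2]; ring
    have := hvmax u huA
    rw [hGu] at this
    linarith
  set m := Fintype.card ι with hm
  let e : Fin m ≃ ι := (Fintype.equivFin ι).symm
  have hpre : ∀ i : ι, ∃ x, x ∈ simplex k ∧ CAID.Φ n k x = z i := fun i => by
    obtain ⟨x, hx1, hx2⟩ := hzC (Set.mem_range_self i)
    exact ⟨x, hx1, hx2⟩
  choose xr hxr hΦxr using hpre
  have hmle : m ≤ (n + k - 1).choose (k - 1) := by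
    rw [← card_antidiagonalTuple n k hk]
    exact le_trans hcard (le_of_eq hfr)
  have hp1 : ∑ j : Fin m, ENNReal.ofReal (w (e j)) = 1 := by
    rw [← ENNReal.ofReal_sum_of_nonneg (fun j _ => le_of_lt (hpos (e j)))]
    rw [Equiv.sum_comp e w, hsum, ENNReal.ofReal_one]
  let μM : Measure (Fin k → ℝ) := ∑ j : Fin m, ENNReal.ofReal (w (e j)) • Measure.dirac (xr (e j))
  have hμprob : IsProbabilityMeasure μM := by
    constructor
    rw [Measure.finset_sum_apply]
    simp only [Measure.smul_apply, measure_univ, smul_eq_mul, mul_one]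
    exact hp1
  have hμdiracnull : ∀ j : Fin m, Measure.dirac (xr (e j)) (simplex k)ᶜ = 0 := fun j => by
    rw [Measure.dirac_apply' _ (CAID.isClosed_simplex k).measurableSet.compl]
    simp [Set.indicator, hxr (e j)]
  have hμnull : μM (simplex k)ᶜ = 0 := by
    show (∑ j : Fin m, ENNReal.ofReal (w (e j)) • Measure.dirac (xr (e j))) (simplex k)ᶜ = 0
    rw [Measure.finset_sum_apply]
    simp only [Measure.smul_apply, smul_eq_mul]
    rw [Finset.sum_congr rfl fun j _ => by rw [hμdiracnull j, mul_zero]]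
    exact Finset.sum_const_zero
  have hbary : ∫ x, CAID.Φ n k x ∂μM = v := by
    rw [show μM = ∑ j : Fin m, ENNReal.ofReal (w (e j)) • Measure.dirac (xr (e j)) from rfl]
    rw [integral_finset_sum_measure (fun j _ =>
      (CAID.integrable_cont k (hμdiracnull j) (CAID.continuous_Φ n k)).smul_measure
        ENNReal.ofReal_ne_top)]
    rw [Finset.sum_congr rfl fun j (_ : j ∈ Finset.univ) => by
      rw [integral_smul_measure, integral_dirac, ENNReal.toReal_ofReal (le_of_lt (hpos (e j))),
        hΦxr (e j)]]
    rw [Equiv.sum_comp e (fun i => w i • z i)]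
    exact hcomb
  refine ⟨m, fun j => xr (e j), fun j => ENNReal.ofReal (w (e j)), μM, hmle,
    fun j => hxr (e j), hp1, rfl, hμprob, ?_⟩
  intro ν hνP hνnull
  haveI := hνP
  have h1 : MI n k ν = CAID.Gf n k (∫ x, CAID.Φ n k x ∂ν) := CAID.MI_eq_Gf n k hk hνnull
  have hmem : (∫ x, CAID.Φ n k x ∂ν) ∈ convexHull ℝ C := by
    refine Convex.integral_mem (convex_convexHull ℝ C) ?_ ?_ ?_
    · rw [hhull]
      exact (hTcomp.image hφcont).isClosed
    · filter_upwards [CAID.ae_mem_simplex k hνnull] with x hx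
      exact subset_convexHull ℝ C (Set.mem_image_of_mem _ hx)
    · exact CAID.integrable_cont k hνnull (CAID.continuous_Φ n k)
  have h2 : MI n k μM = CAID.Gf n k v := by
    rw [CAID.MI_eq_Gf n k hk hμnull, hbary]
  rw [h1, h2]
  exact hvmax _ hmem
end
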